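/- For every n ≥ 3, gp(D(P_n)) = 4, and for every n ≥ 6, gp(D(C_n)) = 6. -/

import Mathlib

open SimpleGraph

variable {V : Type*}

/-- A walk is a shortest path if it is a path and its length equals the distance
between its endpoints. -/
def SimpleGraph.IsShortestPath (G : SimpleGraph V) {u v : V} (p : G.Walk u v) : Prop :=
  p.IsPath ∧ p.length = G.dist u v

/-- `S` is a general position set: no three vertices of `S` lie on a common shortest path. -/
def SimpleGraph.IsGPSet (G : SimpleGraph V) (S : Set V) : Prop :=
  ∀ ⦃u v : V⦄ (p : G.Walk u v), G.IsShortestPath p →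
    ∀ x ∈ S, ∀ y ∈ S, ∀ z ∈ S, x ≠ y → x ≠ z → y ≠ z →
      ¬ (x ∈ p.support ∧ y ∈ p.support ∧ z ∈ p.support)

/-- `u` and `v` are `S`-visible: some shortest `u,v`-path has no internal vertex in `S`. -/
def SimpleGraph.SVisible (G : SimpleGraph V) (S : Set V) (u v : V) : Prop :=
  ∃ p : G.Walk u v, G.IsShortestPath p ∧ ∀ w ∈ p.support, w ≠ u → w ≠ v → w ∉ S

/-- `S` is a mutual-visibility set. -/
def SimpleGraph.IsMVSet (G : SimpleGraph V) (S : Set V) : Prop :=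
  ∀ u ∈ S, ∀ v ∈ S, u ≠ v → G.SVisible S u v

/-- `S` is a total mutual-visibility set. -/
def SimpleGraph.IsTotalMVSet (G : SimpleGraph V) (S : Set V) : Prop :=
  ∀ u v : V, u ≠ v → G.SVisible S u v

/-- `S` is an outer mutual-visibility set. -/
def SimpleGraph.IsOuterMVSet (G : SimpleGraph V) (S : Set V) : Prop :=
  G.IsMVSet S ∧ ∀ u ∈ S, ∀ v ∉ S, u ≠ v → G.SVisible S u v

/-- The mutual-visibility number `μ(G)`. -/
noncomputable def SimpleGraph.mutualVisibilityNumber (G : SimpleGraph V) [Fintype V] : ℕ :=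
  sSup {k | ∃ S : Finset V, G.IsMVSet ↑S ∧ S.card = k}

/-- The total mutual-visibility number `μ_t(G)`. -/
noncomputable def SimpleGraph.totalMutualVisibilityNumber (G : SimpleGraph V) [Fintype V] : ℕ :=
  sSup {k | ∃ S : Finset V, G.IsTotalMVSet ↑S ∧ S.card = k}

/-- The outer mutual-visibility number `μ_o(G)`. -/
noncomputable def SimpleGraph.outerMutualVisibilityNumber (G : SimpleGraph V) [Fintype V] : ℕ :=
  sSup {k | ∃ S : Finset V, G.IsOuterMVSet ↑S ∧ S.card = k}

/-- The general position number `gp(G)`. -/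
noncomputable def SimpleGraph.gpNumber (G : SimpleGraph V) [Fintype V] : ℕ :=
  sSup {k | ∃ S : Finset V, G.IsGPSet ↑S ∧ S.card = k}

/-- The double graph `D(G)`: two copies of each vertex, `(u, b)` adjacent to `(v, c)`
iff `u` adjacent to `v` in `G`. -/
def SimpleGraph.doubleGraph (G : SimpleGraph V) : SimpleGraph (V × Bool) where
  Adj x y := G.Adj x.1 y.1
  symm := ⟨fun _ _ h => G.adj_symm h⟩
  loopless := ⟨fun x h => G.irrefl h⟩

/-- The Mycielskian `M(G)`: `some (u, false)` are the original vertices, `some (u, true)`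
their copies, and `none` is the apex vertex `v*`. -/
def SimpleGraph.mycielskian (G : SimpleGraph V) : SimpleGraph (Option (V × Bool)) where
  Adj x y := match x, y with
    | some (u, false), some (v, false) => G.Adj u v
    | some (u, false), some (v, true) => G.Adj u v
    | some (u, true), some (v, false) => G.Adj u v
    | some (_, true), none => True
    | none, some (_, true) => True
    | _, _ => False
  symm := by
    constructor
    rintro (_ | ⟨u, (_|_)⟩) (_ | ⟨v, (_|_)⟩) h <;>
      first
        | exact h
        | exact G.adj_symm h
  loopless := by
    constructor
    rintro (_ | ⟨u, (_|_)⟩) h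
    · exact h
    · exact G.irrefl h
    · exact h

/-!
Three distinct vertices lie on a common shortest path exactly when one of them is metrically
between the other two, so being in general position is a purely metric condition. In `D(G)`,
vertices with distinct projections are exactly as far apart as their projections; hence the
projection of a general position set of `D(G)` is one of `G`, and `gp(D(G)) ≤ 2 gp(G)`.
Conversely, for an independent general position set `X` of `G`, two twins in `X × Bool` are at
distance at most 2 while independence keeps every other pair at distance at least 2, so
`X × Bool` is in general position. For paths and cycles the distances are explicit:
`gp(P_n) = 2`, witnessed by the two ends, and `gp(C_n) = 3`, witnessed by `{0, h, 2h}` with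
`h = ⌊n/2⌋ - 1`, which is independent once `n ≥ 6`.
-/

namespace SimpleGraph

variable {G : SimpleGraph V} {u v : V}

theorem dist_eq_of_lipschitz_of_exists_adj_lt (f : V → ℕ) (hv : f v = 0)
    (hlip : ∀ u w, G.Adj u w → f u ≤ f w + 1)
    (hdesc : ∀ u, u ≠ v → ∃ w, G.Adj u w ∧ f w < f u) (u : V) :
    G.dist u v = f u := by
  have length_ge : ∀ {a b} (p : G.Walk a b), f a ≤ f b + p.length := by
    intro a b p
    induction p with
    | nil => simp
    | cons h _ ih => rw [Walk.length_cons]; linarith [hlip _ _ h]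
  have exists_short : ∀ k u, f u = k → ∃ p : G.Walk u v, p.length ≤ k := by
    intro k
    induction k using Nat.strong_induction_on with
    | _ k ih =>
      intro u hu
      by_cases huv : u = v
      · subst huv; exact ⟨.nil, Nat.zero_le _⟩
      obtain ⟨w, hadj, hw⟩ := hdesc u huv
      obtain ⟨p, hp⟩ := ih (f w) (hu ▸ hw) w rfl
      exact ⟨.cons hadj p, by rw [Walk.length_cons]; omega⟩
  obtain ⟨p, hp⟩ := exists_short _ u rfl
  obtain ⟨q, hq⟩ := p.reachable.exists_walk_length_eq_dist
  exact le_antisymm ((dist_le p).trans hp) (by simpa [hv, hq] using length_ge q)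

theorem Walk.dist_getVert_le (p : G.Walk u v) {i j : ℕ} (hij : i ≤ j) :
    G.dist (p.getVert i) (p.getVert j) ≤ j - i := by
  have hend : (p.drop i).getVert (j - i) = p.getVert j := by
    rw [Walk.drop_getVert, Nat.add_sub_cancel' hij]
  calc G.dist (p.getVert i) (p.getVert j)
      ≤ (((p.drop i).take (j - i)).copy rfl hend).length := dist_le _
    _ ≤ j - i := by simp

theorem Walk.dist_getVert_getVert (p : G.Walk u v) (hp : p.length = G.dist u v) {i j : ℕ}
    (hi : i ≤ p.length) (hj : j ≤ p.length) :
    G.dist (p.getVert i) (p.getVert j) = Nat.dist i j := by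
  wlog hij : i ≤ j generalizing i j
  · rw [dist_comm, Nat.dist_comm]
    exact this hj hi (by omega)
  have hu := p.dist_getVert_le (Nat.zero_le i)
  have hv := p.dist_getVert_le hj
  rw [Walk.getVert_zero] at hu
  rw [Walk.getVert_length] at hv
  have htri₁ := (p.take i).reachable.dist_triangle_left v
  have htri₂ := ((p.drop i).take (j - i)).reachable.dist_triangle_left v
  rw [Walk.drop_getVert, Nat.add_sub_cancel' hij] at htri₂
  have := p.dist_getVert_le hij
  unfold Nat.dist
  omega

theorem Walk.dist_add_dist_eq_of_mem_support (p : G.Walk u v) (hp : p.length = G.dist u v)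
    {x y z : V} (hx : x ∈ p.support) (hy : y ∈ p.support) (hz : z ∈ p.support) :
    G.dist x y + G.dist y z = G.dist x z ∨ G.dist y x + G.dist x z = G.dist y z ∨
      G.dist x z + G.dist z y = G.dist x y := by
  obtain ⟨i, rfl, hi⟩ := Walk.mem_support_iff_exists_getVert.mp hx
  obtain ⟨j, rfl, hj⟩ := Walk.mem_support_iff_exists_getVert.mp hy
  obtain ⟨k, rfl, hk⟩ := Walk.mem_support_iff_exists_getVert.mp hz
  simp only [p.dist_getVert_getVert hp hi hj, p.dist_getVert_getVert hp hj hk,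
    p.dist_getVert_getVert hp hi hk, p.dist_getVert_getVert hp hj hi,
    p.dist_getVert_getVert hp hk hj, Nat.dist]
  omega

theorem isGPSet_iff_dist_add_dist_ne {S : Set V} :
    G.IsGPSet S ↔ ∀ x ∈ S, ∀ y ∈ S, ∀ z ∈ S, x ≠ y → x ≠ z → y ≠ z →
      G.Reachable x y → G.Reachable y z → G.dist x y + G.dist y z ≠ G.dist x z := by
  classical
  constructor
  · intro hS x hx y hy z hz hxy hxz hyz hrxy hryz hxyz
    obtain ⟨p, hp⟩ := hrxy.exists_walk_length_eq_dist
    obtain ⟨q, hq⟩ := hryz.exists_walk_length_eq_dist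
    have hpq : (p.append q).length = G.dist x z := by rw [Walk.length_append]; omega
    exact hS (p.append q) ⟨(p.append q).isPath_of_length_eq_dist hpq, hpq⟩ x hx y hy z hz
      hxy hxz hyz ⟨(p.append q).start_mem_support,
        (Walk.mem_support_append_iff p q).mpr (.inr q.start_mem_support),
        (p.append q).end_mem_support⟩
  · rintro h u v p hp x hx y hy z hz hxy hxz hyz ⟨hxp, hyp, hzp⟩
    have reach : ∀ a ∈ p.support, ∀ b ∈ p.support, G.Reachable a b := fun a ha b hb =>
      (p.takeUntil a ha).reachable.symm.trans (p.takeUntil b hb).reachable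
    rcases p.dist_add_dist_eq_of_mem_support hp.2 hxp hyp hzp with hxyz | hyxz | hxzy
    · exact h x hx y hy z hz hxy hxz hyz (reach _ hxp _ hyp) (reach _ hyp _ hzp) hxyz
    · exact h y hy x hx z hz hxy.symm hyz hxz (reach _ hyp _ hxp) (reach _ hxp _ hzp) hyxz
    · exact h x hx z hz y hy hxz hxy hyz.symm (reach _ hxp _ hzp) (reach _ hzp _ hyp) hxzy

theorem isGPSet_pair (a b : V) : G.IsGPSet {a, b} := by
  rintro - - - - x hx y hy z hz hxy hxz hyz -
  rcases hx with rfl | rfl <;> rcases hy with rfl | rfl <;> rcases hz with rfl | rfl <;>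
    simp_all

def doubleGraphFst (G : SimpleGraph V) : G.doubleGraph →g G := ⟨Prod.fst, id⟩

def doubleGraphIncl (G : SimpleGraph V) (b : Bool) : G →g G.doubleGraph := ⟨(·, b), id⟩

theorem Walk.exists_doubleGraph_walk_length_eq {a c : V} (p : G.Walk a c) (hp : ¬p.Nil)
    (i k : Bool) : ∃ q : G.doubleGraph.Walk (a, i) (c, k), q.length = p.length := by
  cases p with
  | nil => exact absurd .nil hp
  | cons h p =>
    exact ⟨.cons (v := G.doubleGraphIncl k _) h (p.map (G.doubleGraphIncl k)),
      congrArg (· + 1) (p.length_map _)⟩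

theorem doubleGraph_reachable_iff {a c : V} (hac : a ≠ c) (i k : Bool) :
    G.doubleGraph.Reachable (a, i) (c, k) ↔ G.Reachable a c := by
  refine ⟨fun h => h.map G.doubleGraphFst, fun ⟨p⟩ => ?_⟩
  obtain ⟨q, -⟩ := p.exists_doubleGraph_walk_length_eq (Walk.not_nil_of_ne hac) i k
  exact ⟨q⟩

theorem doubleGraph_dist {a c : V} (hac : a ≠ c) (i k : Bool) :
    G.doubleGraph.dist (a, i) (c, k) = G.dist a c := by
  by_cases hr : G.Reachable a c
  · obtain ⟨p, hp⟩ := hr.exists_walk_length_eq_dist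
    obtain ⟨q, hq⟩ := p.exists_doubleGraph_walk_length_eq (Walk.not_nil_of_ne hac) i k
    obtain ⟨r, hr⟩ := q.reachable.exists_walk_length_eq_dist
    refine le_antisymm (hp ▸ hq ▸ dist_le q) ?_
    calc G.dist a c ≤ (r.map G.doubleGraphFst).length := dist_le _
      _ = _ := by rw [Walk.length_map, hr]
  · rw [dist_eq_zero_of_not_reachable hr,
      dist_eq_zero_of_not_reachable (mt (doubleGraph_reachable_iff hac i k).mp hr)]

theorem doubleGraph_dist_le_two {a w : V} (h : G.Adj a w) (i k : Bool) :
    G.doubleGraph.dist (a, i) (a, k) ≤ 2 :=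
  dist_le (.cons (show G.doubleGraph.Adj (a, i) (w, i) from h)
    (.cons (show G.doubleGraph.Adj (w, i) (a, k) from h.symm) .nil))

theorem IsGPSet.image_fst {S : Set (V × Bool)} (hS : G.doubleGraph.IsGPSet S) :
    G.IsGPSet (Prod.fst '' S) := by
  rw [isGPSet_iff_dist_add_dist_ne] at hS ⊢
  rintro _ ⟨⟨a, i⟩, hx, rfl⟩ _ ⟨⟨b, j⟩, hy, rfl⟩ _ ⟨⟨c, k⟩, hz, rfl⟩ hab hac hbc hrab hrbc
  have := hS _ hx _ hy _ hz (ne_of_apply_ne Prod.fst hab) (ne_of_apply_ne Prod.fst hac)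
    (ne_of_apply_ne Prod.fst hbc) ((doubleGraph_reachable_iff hab i j).mpr hrab)
    ((doubleGraph_reachable_iff hbc j k).mpr hrbc)
  rwa [doubleGraph_dist hab, doubleGraph_dist hbc, doubleGraph_dist hac] at this

theorem IsGPSet.prod_univ {X : Set V} (hX : G.IsGPSet X) (hXi : G.IsIndepSet X) :
    G.doubleGraph.IsGPSet (X ×ˢ Set.univ) := by
  have two_le_dist : ∀ x ∈ X ×ˢ Set.univ, ∀ y ∈ X ×ˢ Set.univ, x ≠ y →
      G.doubleGraph.Reachable x y → 2 ≤ G.doubleGraph.dist x y :=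
    fun x hx y hy hxy hr => hr.one_lt_dist_of_ne_of_not_adj hxy
      fun h => hXi hx.1 hy.1 (G.ne_of_adj h) h
  rw [isGPSet_iff_dist_add_dist_ne] at hX ⊢
  rintro ⟨a, i⟩ hx ⟨b, j⟩ hy ⟨c, k⟩ hz hxy hxz hyz hrxy hryz
  by_cases hac : a = c
  · subst hac
    have hab : a ≠ b := by
      rintro rfl
      cases i <;> cases j <;> cases k <;> simp_all
    obtain ⟨p⟩ := (doubleGraph_reachable_iff hab i j).mp hrxy
    have := doubleGraph_dist_le_two (p.adj_snd (Walk.not_nil_of_ne hab)) i k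
    have := two_le_dist _ hx _ hy hxy hrxy
    have := two_le_dist _ hy _ hz hyz hryz
    omega
  by_cases hab : a = b
  · subst hab
    rw [doubleGraph_dist hac, doubleGraph_dist hac]
    have := hrxy.pos_dist_of_ne hxy
    omega
  by_cases hbc : b = c
  · subst hbc
    rw [doubleGraph_dist hab, doubleGraph_dist hab]
    have := hryz.pos_dist_of_ne hyz
    omega
  rw [doubleGraph_dist hab, doubleGraph_dist hbc, doubleGraph_dist hac]
  exact hX a hx.1 b hy.1 c hz.1 hab hac hbc ((doubleGraph_reachable_iff hab i j).mp hrxy)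
    ((doubleGraph_reachable_iff hbc j k).mp hryz)

section gpNumber

variable [Fintype V]

theorem bddAbove_card_isGPSet : BddAbove {k | ∃ S : Finset V, G.IsGPSet ↑S ∧ S.card = k} :=
  ⟨Fintype.card V, by rintro _ ⟨T, -, rfl⟩; exact T.card_le_univ⟩

theorem IsGPSet.card_le_gpNumber {S : Finset V} (hS : G.IsGPSet S) : S.card ≤ G.gpNumber :=
  le_csSup bddAbove_card_isGPSet ⟨S, hS, rfl⟩

theorem exists_isGPSet_card_eq_gpNumber :
    ∃ S : Finset V, G.IsGPSet S ∧ S.card = G.gpNumber :=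
  Nat.sSup_mem (s := {k | ∃ S : Finset V, G.IsGPSet ↑S ∧ S.card = k})
    ⟨0, ∅, by intro _ _ _ _ x hx; simp at hx, rfl⟩ bddAbove_card_isGPSet

theorem gpNumber_eq_of_isGPSet {S : Finset V} (hS : G.IsGPSet S)
    (hmax : ∀ T : Finset V, G.IsGPSet T → T.card ≤ S.card) : G.gpNumber = S.card := by
  obtain ⟨T, hT, hcard⟩ := G.exists_isGPSet_card_eq_gpNumber
  exact le_antisymm (hcard ▸ hmax T hT) hS.card_le_gpNumber

theorem gpNumber_doubleGraph_of_isIndepSet {X : Finset V} (hX : G.IsGPSet X)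
    (hXi : G.IsIndepSet X) (hcard : X.card = G.gpNumber) :
    G.doubleGraph.gpNumber = 2 * G.gpNumber := by
  classical
  have hXD : G.doubleGraph.IsGPSet ↑(X ×ˢ Finset.univ : Finset (V × Bool)) := by
    rw [Finset.coe_product, Finset.coe_univ]
    exact hX.prod_univ hXi
  rw [gpNumber_eq_of_isGPSet hXD fun T hT => ?_]
  · rw [Finset.card_product, Finset.card_univ, Fintype.card_bool, hcard, mul_comm]
  have hTfst : G.IsGPSet ↑(T.image Prod.fst) := by
    rw [Finset.coe_image]
    exact hT.image_fst
  calc T.card ≤ (T.image Prod.fst).card * (T.image Prod.snd).card :=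
        (Finset.card_le_card Finset.subset_product).trans_eq (Finset.card_product _ _)
    _ ≤ G.gpNumber * Fintype.card Bool :=
        Nat.mul_le_mul hTfst.card_le_gpNumber (Finset.card_le_univ _)
    _ = (X ×ˢ Finset.univ).card := by rw [Finset.card_product, Finset.card_univ, hcard]

end gpNumber

section PathAndCycle

variable {n : ℕ}

theorem pathGraph_dist (u v : Fin n) : (pathGraph n).dist u v = Nat.dist u v := by
  refine dist_eq_of_lipschitz_of_exists_adj_lt (fun w : Fin n => Nat.dist w v) (Nat.dist_self _)
    (fun w w' h => ?_) (fun w hw => ?_) u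
  · rw [pathGraph_adj] at h
    simp only [Nat.dist]
    omega
  · have hne : w.val ≠ v.val := Fin.val_ne_of_ne hw
    rcases lt_or_gt_of_ne hne with hlt | hgt
    · exact ⟨⟨w + 1, by omega⟩, pathGraph_adj.mpr (.inl rfl), by simp only [Nat.dist]; omega⟩
    · exact ⟨⟨w - 1, by omega⟩, pathGraph_adj.mpr (.inr (by simp only; omega)),
        by simp only [Nat.dist]; omega⟩

theorem card_le_two_of_isGPSet_pathGraph {S : Finset (Fin n)} (hS : (pathGraph n).IsGPSet S) :
    S.card ≤ 2 := by
  by_contra! h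
  obtain ⟨x, y, z, hx, hy, hz, hxy, hxz, hyz⟩ := Finset.two_lt_card_iff.mp h
  rw [isGPSet_iff_dist_add_dist_ne] at hS
  have reach := pathGraph_preconnected n
  have h₁ := hS x hx y hy z hz hxy hxz hyz (reach _ _) (reach _ _)
  have h₂ := hS y hy x hx z hz hxy.symm hyz hxz (reach _ _) (reach _ _)
  have h₃ := hS x hx z hz y hy hxz hxy hyz.symm (reach _ _) (reach _ _)
  simp only [pathGraph_dist, Nat.dist] at h₁ h₂ h₃
  have := Fin.val_ne_of_ne hxy
  have := Fin.val_ne_of_ne hxz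
  have := Fin.val_ne_of_ne hyz
  omega

theorem exists_isGPSet_isIndepSet_pathGraph (hn : 3 ≤ n) :
    ∃ X : Finset (Fin n), (pathGraph n).IsGPSet X ∧ (pathGraph n).IsIndepSet X ∧ X.card = 2 := by
  refine ⟨{⟨0, by omega⟩, ⟨n - 1, by omega⟩}, ?_, ?_, ?_⟩
  · rw [Finset.coe_pair]
    exact isGPSet_pair _ _
  · rw [Finset.coe_pair]
    rintro x (rfl | rfl) y (rfl | rfl) hxy <;> simp only [pathGraph_adj] <;> omega
  · exact Finset.card_pair (by simp only [ne_eq, Fin.mk.injEq]; omega)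

theorem cycleGraph_adj_iff_dist {u w : Fin n} :
    (cycleGraph n).Adj u w ↔ u ≠ w ∧ (Nat.dist u w = 1 ∨ Nat.dist u w + 1 = n) := by
  rw [cycleGraph_adj', ne_eq, Fin.ext_iff]
  have := u.isLt
  have := w.isLt
  rcases lt_trichotomy u w with h | rfl | h
  · rw [Fin.coe_sub_iff_lt.mpr h, Fin.sub_val_of_le h.le, Nat.dist]
    have := Fin.lt_def.mp h
    omega
  · simp [Fin.sub_val_of_le le_rfl]
  · rw [Fin.coe_sub_iff_lt.mpr h, Fin.sub_val_of_le h.le, Nat.dist]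
    have := Fin.lt_def.mp h
    omega

theorem cycleGraph_dist (u v : Fin n) :
    (cycleGraph n).dist u v = min (Nat.dist u v) (n - Nat.dist u v) := by
  refine dist_eq_of_lipschitz_of_exists_adj_lt
    (fun w : Fin n => min (Nat.dist w v) (n - Nat.dist w v)) (by simp)
    (fun w w' h => ?_) (fun w hw => ?_) u
  · rw [cycleGraph_adj_iff_dist] at h
    have := w.isLt
    have := w'.isLt
    have := v.isLt
    simp only [Nat.dist] at h ⊢
    omega
  · have hne : w.val ≠ v.val := Fin.val_ne_of_ne hw
    have := w.isLt
    have := v.isLt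
    obtain ⟨c, hc, hcw, hadj, hlt⟩ : ∃ c < n, w.val ≠ c ∧
        (Nat.dist w c = 1 ∨ Nat.dist w c + 1 = n) ∧
        min (Nat.dist c v) (n - Nat.dist c v) < min (Nat.dist w v) (n - Nat.dist w v) := by
      -- step along the shorter arc from `w` to `v`, possibly wrapping between `n - 1` and `0`
      simp only [Nat.dist]
      rcases le_or_gt (2 * Nat.dist w v) n with hshort | hlong <;> unfold Nat.dist at * <;>
        rcases lt_or_gt_of_ne hne with h | h
      · exact ⟨w + 1, by omega, by omega, by omega, by omega⟩
      · exact ⟨w - 1, by omega, by omega, by omega, by omega⟩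
      · rcases Nat.eq_zero_or_pos w with h0 | h0
        · exact ⟨n - 1, by omega, by omega, by omega, by omega⟩
        · exact ⟨w - 1, by omega, by omega, by omega, by omega⟩
      · by_cases hlast : w + 1 = n
        · exact ⟨0, by omega, by omega, by omega, by omega⟩
        · exact ⟨w + 1, by omega, by omega, by omega, by omega⟩
    exact ⟨⟨c, hc⟩, cycleGraph_adj_iff_dist.mpr ⟨fun h => hcw (Fin.ext_iff.mp h), hadj⟩, hlt⟩

theorem card_le_three_of_isGPSet_cycleGraph {S : Finset (Fin n)}
    (hS : (cycleGraph n).IsGPSet S) : S.card ≤ 3 := by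
  by_contra! h
  obtain ⟨a, b, c, d, ha, hb, hc, hd, hab, hbc, hcd⟩ :
      ∃ a b c d, a ∈ S ∧ b ∈ S ∧ c ∈ S ∧ d ∈ S ∧ a < b ∧ b < c ∧ c < d := by
    let e := S.orderEmbOfFin rfl
    exact ⟨e ⟨0, by omega⟩, e ⟨1, by omega⟩, e ⟨2, by omega⟩, e ⟨3, by omega⟩,
      S.orderEmbOfFin_mem rfl _, S.orderEmbOfFin_mem rfl _, S.orderEmbOfFin_mem rfl _,
      S.orderEmbOfFin_mem rfl _, e.strictMono (Fin.mk_lt_mk.mpr (by norm_num)),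
      e.strictMono (Fin.mk_lt_mk.mpr (by norm_num)), e.strictMono (Fin.mk_lt_mk.mpr (by norm_num))⟩
  rw [isGPSet_iff_dist_add_dist_ne] at hS
  have reach := cycleGraph_preconnected (n := n)
  have hac := hab.trans hbc
  have := d.isLt
  have := Fin.lt_def.mp hab
  have := Fin.lt_def.mp hbc
  have := Fin.lt_def.mp hcd
  -- one of the arcs `a, b, c` and `c, d, a` is at most half the cycle
  rcases le_or_gt (2 * (c.val - a.val)) n with hshort | hlong
  · refine hS a ha b hb c hc hab.ne hac.ne hbc.ne (reach _ _) (reach _ _) ?_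
    simp only [cycleGraph_dist, Nat.dist]
    omega
  · refine hS c hc d hd a ha hcd.ne hac.ne' (hac.trans hcd).ne' (reach _ _) (reach _ _) ?_
    simp only [cycleGraph_dist, Nat.dist]
    omega

theorem exists_isGPSet_isIndepSet_cycleGraph (hn : 6 ≤ n) :
    ∃ X : Finset (Fin n), (cycleGraph n).IsGPSet X ∧ (cycleGraph n).IsIndepSet X ∧
      X.card = 3 := by
  obtain ⟨H, hH, hHn, hnH⟩ : ∃ H, 2 ≤ H ∧ 2 * H + 2 ≤ n ∧ n ≤ 2 * H + 3 := ⟨n / 2 - 1, by omega⟩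
  refine ⟨{⟨0, by omega⟩, ⟨H, by omega⟩, ⟨2 * H, by omega⟩}, ?_, ?_, ?_⟩
  · rw [isGPSet_iff_dist_add_dist_ne]
    simp only [Finset.coe_insert, Finset.coe_singleton, Set.mem_insert_iff,
      Set.mem_singleton_iff]
    rintro x (rfl | rfl | rfl) y (rfl | rfl | rfl) z (rfl | rfl | rfl) hxy hxz hyz - - <;>
      simp only [ne_eq, Fin.mk.injEq, not_true_eq_false, cycleGraph_dist, Nat.dist]
        at hxy hxz hyz ⊢ <;> omega
  · simp only [Finset.coe_insert, Finset.coe_singleton]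
    rintro x (rfl | rfl | rfl) y (rfl | rfl | rfl) hxy <;>
      simp only [cycleGraph_adj_iff_dist, ne_eq, Fin.mk.injEq, not_true_eq_false, Nat.dist]
        at hxy ⊢ <;> omega
  · exact Finset.card_eq_three.mpr ⟨_, _, _, by simp only [ne_eq, Fin.mk.injEq]; omega,
      by simp only [ne_eq, Fin.mk.injEq]; omega, by simp only [ne_eq, Fin.mk.injEq]; omega, rfl⟩

end PathAndCycle

end SimpleGraph

theorem gp_double_path_cycle :
    (∀ n : ℕ, 3 ≤ n → (SimpleGraph.pathGraph n).doubleGraph.gpNumber = 4) ∧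
    (∀ n : ℕ, 6 ≤ n → (SimpleGraph.cycleGraph n).doubleGraph.gpNumber = 6) := by
  refine ⟨fun n hn => ?_, fun n hn => ?_⟩
  · obtain ⟨X, hX, hXi, hcard⟩ := exists_isGPSet_isIndepSet_pathGraph hn
    have hgp : (pathGraph n).gpNumber = 2 :=
      hcard ▸ gpNumber_eq_of_isGPSet hX fun T hT => hcard ▸ card_le_two_of_isGPSet_pathGraph hT
    rw [gpNumber_doubleGraph_of_isIndepSet hX hXi (hcard.trans hgp.symm), hgp]
  · obtain ⟨X, hX, hXi, hcard⟩ := exists_isGPSet_isIndepSet_cycleGraph hn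
    have hgp : (cycleGraph n).gpNumber = 3 :=
      hcard ▸ gpNumber_eq_of_isGPSet hX fun T hT => hcard ▸ card_le_three_of_isGPSet_cycleGraph hT
    rw [gpNumber_doubleGraph_of_isIndepSet hX hXi (hcard.trans hgp.symm), hgp]
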